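/- Let b > 1, let α > 0 be a real number, and let k, ℓ₁, ℓ₂ ≥ 0 be integers with ℓ₁ + ℓ₂ < k. Let f; x_1, …, x_{k−ℓ₂} (contents of original nodes); x'_1, …, x'_{ℓ₂} (contents of the ℓ₂ repaired nodes); d_1, …, d_{ℓ₂} (the data downloaded during the corresponding node repairs); and d_{i,j} for ℓ₁+1 ≤ i ≤ k−ℓ₂ and 1 ≤ j ≤ ℓ₂ (the part of d_j sent by node i) be random variables taking values in finite sets on a common probability space. Assume: (i) security: I(f; (x_1, …, x_{ℓ₁}, d_1, …, d_{ℓ₂})) = 0; (ii) each repaired node is determined by its downloads: H(x'_j | d_j) = 0 for every j; (iii) each per-node download is a function of the total download: H(d_{i,j} | d_j) = 0 for all i, j; (iv) reconstruction from any k nodes: H(f | x_1, …, x_{k−ℓ₂}, x'_1, …, x'_{ℓ₂}) = 0; (v) per-node storage: H(x_i) ≤ α for every ℓ₁+1 ≤ i ≤ k−ℓ₂. Then H(f) ≤ ∑_{i=ℓ₁+1}^{k−ℓ₂} ( α − I(x_i; (d_{i,1}, …, d_{i,ℓ₂})) ). -/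

import Mathlib

/-! Finite-probability-space Shannon entropy framework. -/

/-- `p` is a probability mass function on the finite sample space `Ω`. -/
def IsPMF {Ω : Type} [Fintype Ω] (p : Ω → ℝ) : Prop :=
  (∀ ω, 0 ≤ p ω) ∧ ∑ ω, p ω = 1

/-- Probability that the random variable `X` takes the value `x`. -/
noncomputable def prEq {Ω : Type} [Fintype Ω] (p : Ω → ℝ) {S : Type} [DecidableEq S]
    (X : Ω → S) (x : S) : ℝ :=
  ∑ ω, if X ω = x then p ω else 0

/-- Shannon entropy (base `b`) of the random variable `X` on the finite probability
space `(Ω, p)`.  Terms with probability `0` vanish since `Real.logb b 0 = 0`. -/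
noncomputable def entH {Ω : Type} [Fintype Ω] (b : ℝ) (p : Ω → ℝ) {S : Type}
    [Fintype S] [DecidableEq S] (X : Ω → S) : ℝ :=
  -∑ x, prEq p X x * Real.logb b (prEq p X x)

/-- Conditional entropy `H(X | Y) = H(X, Y) - H(Y)`. -/
noncomputable def condH {Ω : Type} [Fintype Ω] (b : ℝ) (p : Ω → ℝ) {S T : Type}
    [Fintype S] [DecidableEq S] [Fintype T] [DecidableEq T]
    (X : Ω → S) (Y : Ω → T) : ℝ :=
  entH b p (fun ω => (X ω, Y ω)) - entH b p Y

/-- Mutual information `I(X; Y) = H(X) + H(Y) - H(X, Y)`. -/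
noncomputable def mutI {Ω : Type} [Fintype Ω] (b : ℝ) (p : Ω → ℝ) {S T : Type}
    [Fintype S] [DecidableEq S] [Fintype T] [DecidableEq T]
    (X : Ω → S) (Y : Ω → T) : ℝ :=
  entH b p X + entH b p Y - entH b p (fun ω => (X ω, Y ω))

/-- Independence of two random variables on a finite probability space. -/
def IndepRV {Ω : Type} [Fintype Ω] (p : Ω → ℝ) {S T : Type} [DecidableEq S] [DecidableEq T]
    (X : Ω → S) (Y : Ω → T) : Prop :=
  ∀ x y, prEq p (fun ω => (X ω, Y ω)) (x, y) = prEq p X x * prEq p Y y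



/-!
Let `E = (x_1, …, x_{ℓ₁}, d_1, …, d_{ℓ₂})` be what the eavesdropper sees and
`M = (x_1, …, x_{k-ℓ₂})`. Security gives `H(f) = H(f | E)`; the repaired nodes are determined by
`E`, so reconstruction gives `H(f | M, E) = 0` and hence `H(f) ≤ H(M | E) ≤ ∑ᵢ H(x_i | E)`.
The first `ℓ₁` terms vanish, and for the others the downloads `d_{i,·}` are determined by `E`, so
`H(x_i | E) ≤ H(x_i | d_{i,·}) = H(x_i) - I(x_i; d_{i,·}) ≤ α - I(x_i; d_{i,·})`.
The only analytic input is submodularity, `H(A,B,C) + H(C) ≤ H(A,C) + H(B,C)`, which follows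
from Gibbs' inequality.
-/

open Finset Real

section Distribution

variable {Ω : Type} [Fintype Ω] {p : Ω → ℝ} {S T : Type} [DecidableEq S] [DecidableEq T]

theorem prEq_nonneg (hp : IsPMF p) (X : Ω → S) (x : S) : 0 ≤ prEq p X x :=
  sum_nonneg fun ω _ => by split_ifs <;> simp [hp.1 ω]

theorem le_prEq_apply (hp : IsPMF p) (X : Ω → S) (ω : Ω) : p ω ≤ prEq p X (X ω) := by
  simpa [prEq] using single_le_sum (f := fun ω' => if X ω' = X ω then p ω' else 0)
    (fun ω' _ => by split_ifs <;> simp [hp.1 ω']) (mem_univ ω)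

theorem prEq_le_prEq_comp (hp : IsPMF p) (X : Ω → S) (g : S → T) (x : S) :
    prEq p X x ≤ prEq p (fun ω => g (X ω)) (g x) :=
  sum_le_sum fun ω _ => by
    by_cases hx : X ω = x
    · simp [hx]
    · simp only [hx, if_false]
      split_ifs <;> simp [hp.1 ω]

theorem prEq_comp_of_injective (X : Ω → S) {g : S → T} (hg : Function.Injective g) (x : S) :
    prEq p (fun ω => g (X ω)) (g x) = prEq p X x := by
  simp only [prEq, hg.eq_iff]

theorem sum_prEq_mul [Fintype S] (X : Ω → S) (h : S → ℝ) :
    ∑ x, prEq p X x * h x = ∑ ω, p ω * h (X ω) := by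
  simp only [prEq, sum_mul, ite_mul, zero_mul]
  rw [sum_comm]
  simp

theorem sum_prEq [Fintype S] (hp : IsPMF p) (X : Ω → S) : ∑ x, prEq p X x = 1 := by
  simpa [hp.2] using sum_prEq_mul (p := p) X fun _ => 1

theorem sum_prEq_pair_left [Fintype S] (X : Ω → S) (Y : Ω → T) (y : T) :
    ∑ x, prEq p (fun ω => (X ω, Y ω)) (x, y) = prEq p Y y := by
  simp only [prEq, Prod.mk.injEq]
  rw [sum_comm]
  simp [ite_and]

end Distribution

theorem sum_mul_logb_le_sum_mul_logb {ι : Type*} [Fintype ι] {b : ℝ} (hb : 1 < b)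
    {P Q : ι → ℝ} (hP : ∀ i, 0 ≤ P i) (hQ : ∀ i, 0 ≤ Q i) (hPQ : ∀ i, P i ≠ 0 → Q i ≠ 0)
    (hsum : ∑ i, Q i ≤ ∑ i, P i) :
    ∑ i, P i * logb b (Q i) ≤ ∑ i, P i * logb b (P i) := by
  have hlog : 0 < log b := log_pos hb
  have key : ∀ i, P i * logb b (Q i) ≤ P i * logb b (P i) + (Q i - P i) / log b := by
    intro i
    rcases (hP i).eq_or_lt with h0 | hpos
    · simpa [← h0] using div_nonneg (hQ i) hlog.le
    · have hQpos : 0 < Q i := (hQ i).lt_of_ne (hPQ i hpos.ne').symm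
      have hlog_le := log_le_sub_one_of_pos (div_pos hQpos hpos)
      rw [log_div hQpos.ne' hpos.ne', le_sub_iff_add_le, le_div_iff₀ hpos] at hlog_le
      simp only [logb, mul_div_assoc', ← add_div]
      rw [div_le_div_iff_of_pos_right hlog]
      linarith
  calc ∑ i, P i * logb b (Q i)
      ≤ ∑ i, (P i * logb b (P i) + (Q i - P i) / log b) := sum_le_sum fun i _ => key i
    _ = ∑ i, P i * logb b (P i) + (∑ i, Q i - ∑ i, P i) / log b := by
      rw [sum_add_distrib, ← sum_div, sum_sub_distrib]
    _ ≤ ∑ i, P i * logb b (P i) :=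
      add_le_of_nonpos_right (div_nonpos_of_nonpos_of_nonneg (sub_nonpos.2 hsum) hlog.le)

section Entropy

variable {Ω : Type} [Fintype Ω] {b : ℝ} {p : Ω → ℝ}
  {S T U : Type} [Fintype S] [DecidableEq S] [Fintype T] [DecidableEq T]
  [Fintype U] [DecidableEq U]

theorem entH_eq_sum (X : Ω → S) : entH b p X = -∑ ω, p ω * logb b (prEq p X (X ω)) := by
  rw [entH, sum_prEq_mul X fun x => logb b (prEq p X x)]

theorem entH_comp_of_injective (X : Ω → S) {g : S → T} (hg : Function.Injective g) :
    entH b p (fun ω => g (X ω)) = entH b p X := by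
  simp only [entH_eq_sum, prEq_comp_of_injective X hg]

theorem entH_comp_le (hb : 1 < b) (hp : IsPMF p) (X : Ω → S) (g : S → T) :
    entH b p (fun ω => g (X ω)) ≤ entH b p X := by
  rw [entH_eq_sum, entH_eq_sum, neg_le_neg_iff]
  refine sum_le_sum fun ω _ => ?_
  rcases (hp.1 ω).eq_or_lt with h0 | hpos
  · simp [← h0]
  · exact mul_le_mul_of_nonneg_left (logb_le_logb_of_le hb
      (hpos.trans_le (le_prEq_apply hp X ω)) (prEq_le_prEq_comp hp X g (X ω))) hpos.le

theorem sum_prEq_pair_mul_prEq_pair_div_prEq (hp : IsPMF p) (A : Ω → S) (B : Ω → T)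
    (C : Ω → U) :
    ∑ z : S × T × U, prEq p (fun ω => (A ω, C ω)) (z.1, z.2.2) * prEq p (fun ω => (B ω, C ω)) z.2
      / prEq p C z.2.2 = 1 := by
  calc _ = ∑ c, (∑ a, prEq p (fun ω => (A ω, C ω)) (a, c))
        * (∑ b, prEq p (fun ω => (B ω, C ω)) (b, c)) / prEq p C c := by
        simp only [Fintype.sum_prod_type, sum_mul_sum, sum_div]
        exact (sum_congr rfl fun _ _ => sum_comm).trans sum_comm
    _ = ∑ c, prEq p C c := by simp only [sum_prEq_pair_left, mul_self_div_self]
    _ = 1 := sum_prEq hp C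

theorem entH_submodular (hb : 1 < b) (hp : IsPMF p) (A : Ω → S) (B : Ω → T) (C : Ω → U) :
    entH b p (fun ω => (A ω, B ω, C ω)) + entH b p C
      ≤ entH b p (fun ω => (A ω, C ω)) + entH b p (fun ω => (B ω, C ω)) := by
  set P := prEq p (fun ω => (A ω, B ω, C ω))
  set pAC := prEq p (fun ω => (A ω, C ω))
  set pBC := prEq p (fun ω => (B ω, C ω))
  set pC := prEq p C
  -- `Q` is the law of `(A, B, C)` when `A` and `B` are made conditionally independent given `C`.
  set Q : S × T × U → ℝ := fun z => pAC (z.1, z.2.2) * pBC z.2 / pC z.2.2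
  have hQ : ∀ z, 0 ≤ Q z := fun z =>
    div_nonneg (mul_nonneg (prEq_nonneg hp _ _) (prEq_nonneg hp _ _)) (prEq_nonneg hp _ _)
  have hPQ : ∀ z, P z ≠ 0 → Q z ≠ 0 := fun z hz => by
    have hpos : 0 < P z := (prEq_nonneg hp _ z).lt_of_ne' hz
    have hAC : P z ≤ pAC (z.1, z.2.2) := prEq_le_prEq_comp hp _ (fun z => (z.1, z.2.2)) z
    have hBC : P z ≤ pBC z.2 := prEq_le_prEq_comp hp _ Prod.snd z
    have hC : P z ≤ pC z.2.2 := prEq_le_prEq_comp hp _ (fun z => z.2.2) z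
    exact (div_pos (mul_pos (hpos.trans_le hAC) (hpos.trans_le hBC)) (hpos.trans_le hC)).ne'
  have hsum : ∑ z, Q z = ∑ z, P z :=
    (sum_prEq_pair_mul_prEq_pair_div_prEq hp A B C).trans (sum_prEq hp _).symm
  have hlogQ : ∀ ω, p ω * logb b (Q (A ω, B ω, C ω)) = p ω * logb b (pAC (A ω, C ω))
      + p ω * logb b (pBC (B ω, C ω)) - p ω * logb b (pC (C ω)) := fun ω => by
    rcases (hp.1 ω).eq_or_lt with h0 | hpos
    · simp [← h0]
    · have hAC := hpos.trans_le (le_prEq_apply hp (fun ω => (A ω, C ω)) ω)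
      have hBC := hpos.trans_le (le_prEq_apply hp (fun ω => (B ω, C ω)) ω)
      have hC := hpos.trans_le (le_prEq_apply hp C ω)
      rw [logb_div (mul_pos hAC hBC).ne' hC.ne', logb_mul hAC.ne' hBC.ne']
      ring
  have gibbs := sum_mul_logb_le_sum_mul_logb hb (prEq_nonneg hp _) hQ hPQ hsum.le
  rw [sum_prEq_mul, sum_prEq_mul, sum_congr rfl fun ω _ => hlogQ ω, sum_sub_distrib,
    sum_add_distrib] at gibbs
  simp only [entH_eq_sum]
  linarith

end Entropy

section ConditionalEntropy

variable {Ω : Type} [Fintype Ω] {b : ℝ} {p : Ω → ℝ}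
  {S T U : Type} [Fintype S] [DecidableEq S] [Fintype T] [DecidableEq T]
  [Fintype U] [DecidableEq U]

theorem condH_eq_entH_sub_mutI (X : Ω → S) (Y : Ω → T) :
    condH b p X Y = entH b p X - mutI b p X Y := by
  rw [condH, mutI]
  ring

theorem condH_nonneg (hb : 1 < b) (hp : IsPMF p) (X : Ω → S) (Y : Ω → T) :
    0 ≤ condH b p X Y :=
  sub_nonneg.2 (entH_comp_le hb hp (fun ω => (X ω, Y ω)) Prod.snd)

theorem condH_comp_self (Y : Ω → T) (g : T → S) : condH b p (fun ω => g (Y ω)) Y = 0 :=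
  sub_eq_zero.2 (entH_comp_of_injective Y (g := fun y => (g y, y))
    fun _ _ h => congrArg Prod.snd h)

theorem condH_comp_left_of_injective (X : Ω → S) (Y : Ω → T) {g : S → U}
    (hg : Function.Injective g) : condH b p (fun ω => g (X ω)) Y = condH b p X Y := by
  rw [condH, condH,
    ← entH_comp_of_injective (fun ω => (X ω, Y ω)) (hg.prodMap Function.injective_id)]
  rfl

theorem condH_comp_right_of_injective (X : Ω → S) (Y : Ω → T) {g : T → U}
    (hg : Function.Injective g) : condH b p X (fun ω => g (Y ω)) = condH b p X Y := by
  rw [condH, condH, entH_comp_of_injective Y hg,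
    ← entH_comp_of_injective (fun ω => (X ω, Y ω)) (Function.injective_id.prodMap hg)]
  rfl

theorem condH_pair_right_le (hb : 1 < b) (hp : IsPMF p) (A : Ω → S) (B : Ω → T) (C : Ω → U) :
    condH b p A (fun ω => (B ω, C ω)) ≤ condH b p A C := by
  have := entH_submodular hb hp A B C
  rw [condH, condH]
  linarith

theorem condH_le_condH_comp (hb : 1 < b) (hp : IsPMF p) (A : Ω → S) (Y : Ω → T) (g : T → U) :
    condH b p A Y ≤ condH b p A (fun ω => g (Y ω)) := by
  rw [← condH_comp_right_of_injective A Y (g := fun y => (y, g y))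
    fun _ _ h => congrArg Prod.fst h]
  exact condH_pair_right_le hb hp A Y (fun ω => g (Y ω))

theorem condH_eq_zero_of_comp (hb : 1 < b) (hp : IsPMF p) {A : Ω → S} {Y : Ω → T} (g : T → U)
    (h : condH b p A (fun ω => g (Y ω)) = 0) : condH b p A Y = 0 :=
  le_antisymm (h ▸ condH_le_condH_comp hb hp A Y g) (condH_nonneg hb hp A Y)

theorem condH_pair_left_le_add (hb : 1 < b) (hp : IsPMF p) (A : Ω → S) (B : Ω → T) (C : Ω → U) :
    condH b p (fun ω => (A ω, B ω)) C ≤ condH b p A C + condH b p B C := by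
  have hassoc : entH b p (fun ω => ((A ω, B ω), C ω)) = entH b p (fun ω => (A ω, B ω, C ω)) :=
    entH_comp_of_injective (fun ω => (A ω, B ω, C ω)) (g := fun z => ((z.1, z.2.1), z.2.2))
      (Function.LeftInverse.injective (g := fun w => (w.1.1, w.1.2, w.2)) fun _ => rfl)
  have := entH_submodular hb hp A B C
  rw [condH, condH, condH, hassoc]
  linarith

theorem condH_le_condH_add_condH_pair (hb : 1 < b) (hp : IsPMF p) (A : Ω → S) (B : Ω → T)
    (C : Ω → U) : condH b p A C ≤ condH b p B C + condH b p A (fun ω => (B ω, C ω)) := by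
  have := entH_comp_le hb hp (fun ω => (A ω, B ω, C ω)) fun z => (z.1, z.2.2)
  rw [condH, condH, condH]
  linarith

theorem condH_le_of_condH_eq_zero (hb : 1 < b) (hp : IsPMF p) (A : Ω → S) {B : Ω → T}
    {C : Ω → U} (h : condH b p B C = 0) : condH b p A C ≤ condH b p A B :=
  calc condH b p A C ≤ condH b p B C + condH b p A (fun ω => (B ω, C ω)) :=
        condH_le_condH_add_condH_pair hb hp A B C
    _ = condH b p A (fun ω => (B ω, C ω)) := by rw [h, zero_add]
    _ ≤ condH b p A B := condH_le_condH_comp hb hp A (fun ω => (B ω, C ω)) Prod.fst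

theorem condH_le_entH_sub_mutI_of_condH_eq_zero (hb : 1 < b) (hp : IsPMF p) (A : Ω → S)
    {B : Ω → T} {C : Ω → U} (h : condH b p B C = 0) :
    condH b p A C ≤ entH b p A - mutI b p A B :=
  (condH_le_of_condH_eq_zero hb hp A h).trans_eq (condH_eq_entH_sub_mutI A B)

theorem condH_pi_le_sum (hb : 1 < b) (hp : IsPMF p) {n : ℕ} {V : Fin n → Type}
    [∀ j, Fintype (V j)] [∀ j, DecidableEq (V j)] (W : ∀ j, Ω → V j) (Y : Ω → T) :
    condH b p (fun ω j => W j ω) Y ≤ ∑ j, condH b p (W j) Y := by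
  induction n with
  | zero =>
    have hconst : (fun ω j => W j ω) = fun ω => (fun _ : T => (finZeroElim : ∀ j, V j)) (Y ω) :=
      funext fun _ => Subsingleton.elim _ _
    rw [hconst, Fin.sum_univ_zero]
    exact (condH_comp_self Y fun _ => (finZeroElim : ∀ j, V j)).le
  | succ n ih =>
    have hinj : Function.Injective fun w : (∀ j, V j) => (w 0, Fin.tail w) :=
      Function.LeftInverse.injective
        (g := fun z : V 0 × (∀ j : Fin n, V j.succ) => (Fin.cons z.1 z.2 : ∀ j, V j))
        Fin.cons_self_tail
    have hsplit : condH b p (fun ω => (W 0 ω, fun j : Fin n => W j.succ ω)) Y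
        = condH b p (fun ω j => W j ω) Y :=
      (condH_comp_left_of_injective (fun ω j => W j ω) Y hinj :)
    rw [← hsplit, Fin.sum_univ_succ]
    calc condH b p (fun ω => (W 0 ω, fun j : Fin n => W j.succ ω)) Y
        ≤ condH b p (W 0) Y + condH b p (fun ω (j : Fin n) => W j.succ ω) Y :=
          condH_pair_left_le_add hb hp (W 0) (fun ω (j : Fin n) => W j.succ ω) Y
      _ ≤ condH b p (W 0) Y + ∑ j : Fin n, condH b p (W j.succ) Y :=
          add_le_add le_rfl (ih fun j => W j.succ)

theorem condH_pi_eq_zero (hb : 1 < b) (hp : IsPMF p) {n : ℕ} {V : Fin n → Type}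
    [∀ j, Fintype (V j)] [∀ j, DecidableEq (V j)] {W : ∀ j, Ω → V j} {Y : Ω → T}
    (h : ∀ j, condH b p (W j) Y = 0) : condH b p (fun ω j => W j ω) Y = 0 :=
  le_antisymm ((condH_pi_le_sum hb hp W Y).trans_eq (sum_eq_zero fun j _ => h j))
    (condH_nonneg hb hp _ Y)

theorem condH_eq_zero_of_condH_pair_eq_zero (hb : 1 < b) (hp : IsPMF p) {A : Ω → S} {B : Ω → T}
    {C : Ω → U} (hB : condH b p B C = 0) (hA : condH b p A (fun ω => (B ω, C ω)) = 0) :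
    condH b p A C = 0 :=
  le_antisymm (by simpa [hB, hA] using condH_le_condH_add_condH_pair hb hp A B C)
    (condH_nonneg hb hp A C)

theorem entH_le_condH_of_mutI_eq_zero (hb : 1 < b) (hp : IsPMF p) {f : Ω → S} {E : Ω → U}
    (M : Ω → T) (hsec : mutI b p f E = 0) (hrec : condH b p f (fun ω => (M ω, E ω)) = 0) :
    entH b p f ≤ condH b p M E :=
  calc entH b p f = condH b p f E := by rw [condH_eq_entH_sub_mutI, hsec, sub_zero]
    _ ≤ condH b p M E + condH b p f (fun ω => (M ω, E ω)) :=
      condH_le_condH_add_condH_pair hb hp f M E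
    _ = condH b p M E := by rw [hrec, add_zero]

end ConditionalEntropy

theorem sum_fin_add_one_eq_sum_Ioc {M : Type*} [AddCommMonoid M] (g : ℕ → M) (n : ℕ) :
    ∑ i : Fin n, g (i + 1) = ∑ i ∈ Ioc 0 n, g i := by
  rw [Fin.sum_univ_eq_sum_range (fun i => g (i + 1)), range_eq_Ico, sum_Ico_add',
    Ico_add_one_add_one_eq_Ioc]

theorem msr_secrecy_capacity_bound_general
    {Ω : Type} [Fintype Ω] (b : ℝ) (hb : 1 < b) (p : Ω → ℝ) (hp : IsPMF p)
    (α : ℝ) (k l₁ l₂ : ℕ)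
    {F : Type} [Fintype F] [DecidableEq F] (f : Ω → F)
    {X : ℕ → Type} [∀ i, Fintype (X i)] [∀ i, DecidableEq (X i)] (x : ∀ i, Ω → X i)
    {X' : ℕ → Type} [∀ j, Fintype (X' j)] [∀ j, DecidableEq (X' j)] (x' : ∀ j, Ω → X' j)
    {D : ℕ → Type} [∀ j, Fintype (D j)] [∀ j, DecidableEq (D j)] (d : ∀ j, Ω → D j)
    {DD : ℕ → ℕ → Type} [∀ i j, Fintype (DD i j)] [∀ i j, DecidableEq (DD i j)]
    (dd : ∀ i j, Ω → DD i j)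
    -- (i) security against the (ℓ₁, ℓ₂)-eavesdropper
    (hsec : mutI b p f (fun ω =>
      ((fun i : Fin l₁ => x (i.val + 1) ω), (fun j : Fin l₂ => d (j.val + 1) ω))) = 0)
    -- (ii) each repaired node is a function of its downloads
    (hrep : ∀ j, 1 ≤ j → j ≤ l₂ → condH b p (x' j) (d j) = 0)
    -- (iii) each per-node download is a function of the total download
    (hdown : ∀ i j, l₁ + 1 ≤ i → i ≤ k - l₂ → 1 ≤ j → j ≤ l₂ →
      condH b p (dd i j) (d j) = 0)
    -- (iv) reconstruction from the k nodes x_1, …, x_{k-ℓ₂}, x'_1, …, x'_{ℓ₂}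
    (hrec : condH b p f (fun ω =>
      ((fun i : Fin (k - l₂) => x (i.val + 1) ω), (fun j : Fin l₂ => x' (j.val + 1) ω))) = 0)
    -- (v) per-node storage bound
    (hstore : ∀ i, l₁ + 1 ≤ i → i ≤ k - l₂ → entH b p (x i) ≤ α) :
    entH b p f ≤ ∑ i ∈ Finset.Ioc l₁ (k - l₂),
      (α - mutI b p (x i) (fun ω => fun j : Fin l₂ => dd i (j.val + 1) ω)) := by
  set E := fun ω =>
    ((fun i : Fin l₁ => x (i.val + 1) ω), (fun j : Fin l₂ => d (j.val + 1) ω))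
  set M := fun ω (i : Fin (k - l₂)) => x (i.val + 1) ω
  have hR : condH b p (fun ω (j : Fin l₂) => x' (j.val + 1) ω) (fun ω => (M ω, E ω)) = 0 :=
    condH_pi_eq_zero hb hp fun j =>
      condH_eq_zero_of_comp hb hp (fun z => z.2.2 j) (hrep _ (by omega) (by omega))
  have hfME : condH b p f (fun ω => (M ω, E ω)) = 0 :=
    condH_eq_zero_of_condH_pair_eq_zero hb hp hR
      (condH_eq_zero_of_comp hb hp (fun z => (z.2.1, z.1)) hrec)
  have hlow : ∀ i ∈ Ioc 0 (k - l₂), i ∉ Ioc l₁ (k - l₂) → condH b p (x i) E = 0 := by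
    intro i hi hi'
    simp only [mem_Ioc, not_and, not_le] at hi hi'
    obtain ⟨m, rfl⟩ : ∃ m, i = m + 1 := ⟨i - 1, by omega⟩
    exact (condH_comp_self E fun e => e.1 ⟨m, by omega⟩ :)
  have hmid : ∀ i ∈ Ioc l₁ (k - l₂), condH b p (x i) E
      ≤ α - mutI b p (x i) (fun ω (j : Fin l₂) => dd i (j.val + 1) ω) := by
    intro i hi
    rw [mem_Ioc] at hi
    have hdd : condH b p (fun ω (j : Fin l₂) => dd i (j.val + 1) ω) E = 0 :=
      condH_pi_eq_zero hb hp fun j => condH_eq_zero_of_comp hb hp (fun e => e.2 j)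
        (hdown i _ (by omega) hi.2 (by omega) (by omega))
    exact (condH_le_entH_sub_mutI_of_condH_eq_zero hb hp (x i) hdd).trans
      (sub_le_sub_right (hstore i (by omega) hi.2) _)
  calc entH b p f ≤ condH b p M E := entH_le_condH_of_mutI_eq_zero hb hp M hsec hfME
    _ ≤ ∑ i : Fin (k - l₂), condH b p (x (i.val + 1)) E := condH_pi_le_sum hb hp _ E
    _ = ∑ i ∈ Ioc 0 (k - l₂), condH b p (x i) E :=
      sum_fin_add_one_eq_sum_Ioc (fun i => condH b p (x i) E) _
    _ = ∑ i ∈ Ioc l₁ (k - l₂), condH b p (x i) E :=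
      (sum_subset (Ioc_subset_Ioc_left (Nat.zero_le _)) hlow).symm
    _ ≤ _ := sum_le_sum hmid

/-- **Upper bound on the secure file size at the MSR point**
(Theorem 1 of Rawat–Koyluoglu–Silberstein–Vishwanath).
Nodes are indexed `1, …, k - ℓ₂` (original nodes `x`), repaired nodes and their
downloads are indexed `1, …, ℓ₂` (`x'` and `d`), and `dd i j` is the part of the
download `d j` sent by node `i`.  Under the security, repair, reconstruction and
storage hypotheses, the securely stored file size satisfies
`H(f) ≤ ∑_{i=ℓ₁+1}^{k-ℓ₂} (α - I(x_i; (d_{i,1}, …, d_{i,ℓ₂})))`. -/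
theorem msr_secrecy_capacity_bound
    {Ω : Type} [Fintype Ω] (b : ℝ) (hb : 1 < b) (p : Ω → ℝ) (hp : IsPMF p)
    (α : ℝ) (hα : 0 < α) (k l₁ l₂ : ℕ) (hk : l₁ + l₂ < k)
    {F : Type} [Fintype F] [DecidableEq F] (f : Ω → F)
    {X : ℕ → Type} [∀ i, Fintype (X i)] [∀ i, DecidableEq (X i)] (x : ∀ i, Ω → X i)
    {X' : ℕ → Type} [∀ j, Fintype (X' j)] [∀ j, DecidableEq (X' j)] (x' : ∀ j, Ω → X' j)
    {D : ℕ → Type} [∀ j, Fintype (D j)] [∀ j, DecidableEq (D j)] (d : ∀ j, Ω → D j)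
    {DD : ℕ → ℕ → Type} [∀ i j, Fintype (DD i j)] [∀ i j, DecidableEq (DD i j)]
    (dd : ∀ i j, Ω → DD i j)
    -- (i) security against the (ℓ₁, ℓ₂)-eavesdropper
    (hsec : mutI b p f (fun ω =>
      ((fun i : Fin l₁ => x (i.val + 1) ω), (fun j : Fin l₂ => d (j.val + 1) ω))) = 0)
    -- (ii) each repaired node is a function of its downloads
    (hrep : ∀ j, 1 ≤ j → j ≤ l₂ → condH b p (x' j) (d j) = 0)
    -- (iii) each per-node download is a function of the total download
    (hdown : ∀ i j, l₁ + 1 ≤ i → i ≤ k - l₂ → 1 ≤ j → j ≤ l₂ →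
      condH b p (dd i j) (d j) = 0)
    -- (iv) reconstruction from the k nodes x_1, …, x_{k-ℓ₂}, x'_1, …, x'_{ℓ₂}
    (hrec : condH b p f (fun ω =>
      ((fun i : Fin (k - l₂) => x (i.val + 1) ω), (fun j : Fin l₂ => x' (j.val + 1) ω))) = 0)
    -- (v) per-node storage bound
    (hstore : ∀ i, l₁ + 1 ≤ i → i ≤ k - l₂ → entH b p (x i) ≤ α) :
    entH b p f ≤ ∑ i ∈ Finset.Ioc l₁ (k - l₂),
      (α - mutI b p (x i) (fun ω => fun j : Fin l₂ => dd i (j.val + 1) ω)) :=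
  msr_secrecy_capacity_bound_general b hb p hp α k l₁ l₂ f x x' d dd hsec hrep hdown hrec hstore
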